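/- arXiv:1503.04887 — 2 statements merged into one kernel-verified Lean document; each statement's English description precedes it below -/
import Mathlib

section
/- For any n×n complex matrices F and G, the three conditions F F† = F* Fᵀ, G F† = F* Gᵀ, and G Fᵀ = F Gᵀ hold simultaneously if and only if each of the five real matrices Re(F)Im(F)ᵀ, Re(G)Re(F)ᵀ, Im(G)Im(F)ᵀ, Re(G)Im(F)ᵀ, and Im(G)Re(F)ᵀ is symmetric. (These three conditions are the self-commutativity conditions of Theorem 1 for a set of n general measurements dY = F* dÃ* + F dÃ + G dλ̃ at the outputs of an n-channel open quantum system.) -/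
open Matrix

section Aux
variable {n : ℕ}

lemma re_mul_H (P Q : Matrix (Fin n) (Fin n) ℂ) :
    (P * Qᴴ).map Complex.re
      = P.map Complex.re * (Q.map Complex.re)ᵀ + P.map Complex.im * (Q.map Complex.im)ᵀ := by
  ext i j
  simp [mul_apply, Complex.mul_re, Finset.sum_add_distrib]

lemma im_mul_H (P Q : Matrix (Fin n) (Fin n) ℂ) :
    (P * Qᴴ).map Complex.im
      = P.map Complex.im * (Q.map Complex.re)ᵀ - P.map Complex.re * (Q.map Complex.im)ᵀ := by
  ext i j
  simp [mul_apply, Complex.mul_im, Finset.sum_add_distrib, Finset.sum_neg_distrib, neg_add_eq_sub, ← sub_eq_add_neg]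

lemma re_conj_mul_T (P Q : Matrix (Fin n) (Fin n) ℂ) :
    ((P.map (starRingEnd ℂ)) * Qᵀ).map Complex.re
      = P.map Complex.re * (Q.map Complex.re)ᵀ + P.map Complex.im * (Q.map Complex.im)ᵀ := by
  ext i j
  simp [mul_apply, Complex.mul_re, Finset.sum_add_distrib]

lemma im_conj_mul_T (P Q : Matrix (Fin n) (Fin n) ℂ) :
    ((P.map (starRingEnd ℂ)) * Qᵀ).map Complex.im
      = P.map Complex.re * (Q.map Complex.im)ᵀ - P.map Complex.im * (Q.map Complex.re)ᵀ := by
  ext i j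
  simp [mul_apply, Complex.mul_im, Finset.sum_add_distrib, Finset.sum_neg_distrib, neg_add_eq_sub, ← sub_eq_add_neg]

lemma re_mul_T (P Q : Matrix (Fin n) (Fin n) ℂ) :
    (P * Qᵀ).map Complex.re
      = P.map Complex.re * (Q.map Complex.re)ᵀ - P.map Complex.im * (Q.map Complex.im)ᵀ := by
  ext i j
  simp [mul_apply, Complex.mul_re, Finset.sum_sub_distrib]

lemma im_mul_T (P Q : Matrix (Fin n) (Fin n) ℂ) :
    (P * Qᵀ).map Complex.im
      = P.map Complex.im * (Q.map Complex.re)ᵀ + P.map Complex.re * (Q.map Complex.im)ᵀ := by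
  ext i j
  simp [mul_apply, Complex.mul_im, Finset.sum_add_distrib, add_comm]

lemma ext_re_im (X Y : Matrix (Fin n) (Fin n) ℂ) :
    X = Y ↔ X.map Complex.re = Y.map Complex.re ∧ X.map Complex.im = Y.map Complex.im := by
  constructor
  · rintro rfl; exact ⟨rfl, rfl⟩
  · rintro ⟨h1, h2⟩
    ext i j
    have e1 := congrFun (congrFun h1 i) j
    have e2 := congrFun (congrFun h2 i) j
    simp [map_apply] at e1 e2
    exact Complex.ext e1 e2

lemma two_cancel {x y : Matrix (Fin n) (Fin n) ℝ} (h : x + x = y + y) : x = y := by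
  rw [← two_smul ℝ x, ← two_smul ℝ y] at h
  exact smul_right_injective _ (two_ne_zero) h

lemma isSymm_mul_iff (X Y : Matrix (Fin n) (Fin n) ℝ) :
    (X * Yᵀ).IsSymm ↔ Y * Xᵀ = X * Yᵀ := by
  rw [Matrix.IsSymm, transpose_mul, transpose_transpose]

end Aux

/-- For any n×n complex matrices F and G, the three conditions `F F† = F* Fᵀ`,
`G F† = F* Gᵀ`, and `G Fᵀ = F Gᵀ` hold simultaneously if and only if each of the five
real matrices `Re(F)Im(F)ᵀ`, `Re(G)Re(F)ᵀ`, `Im(G)Im(F)ᵀ`, `Re(G)Im(F)ᵀ`, and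
`Im(G)Re(F)ᵀ` is symmetric. (These are the self-commutativity conditions for a set of n
general measurements at the outputs of an n-channel open quantum system.) -/
theorem stmt_7 (n : ℕ) (F G : Matrix (Fin n) (Fin n) ℂ) :
    (F * Fᴴ = F.map (starRingEnd ℂ) * Fᵀ
        ∧ G * Fᴴ = F.map (starRingEnd ℂ) * Gᵀ
        ∧ G * Fᵀ = F * Gᵀ)
      ↔ (F.map Complex.re * (F.map Complex.im)ᵀ).IsSymm
        ∧ (G.map Complex.re * (F.map Complex.re)ᵀ).IsSymm
        ∧ (G.map Complex.im * (F.map Complex.im)ᵀ).IsSymm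
        ∧ (G.map Complex.re * (F.map Complex.im)ᵀ).IsSymm
        ∧ (G.map Complex.im * (F.map Complex.re)ᵀ).IsSymm := by

  set A := F.map Complex.re with hA
  set B := F.map Complex.im with hB
  set C := G.map Complex.re with hC
  set D := G.map Complex.im with hD
  rw [ext_re_im (F * Fᴴ), re_mul_H, im_mul_H, re_conj_mul_T, im_conj_mul_T,
    ext_re_im (G * Fᴴ), re_mul_H, im_mul_H, re_conj_mul_T, im_conj_mul_T,
    ext_re_im (G * Fᵀ), re_mul_T, im_mul_T, re_mul_T, im_mul_T,
    isSymm_mul_iff, isSymm_mul_iff, isSymm_mul_iff, isSymm_mul_iff, isSymm_mul_iff]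
  constructor
  · rintro ⟨⟨-, h1⟩, ⟨h2re, h2im⟩, ⟨h3re, h3im⟩⟩
    refine ⟨?_, ?_, ?_, ?_, ?_⟩
    · -- B * Aᵀ = A * Bᵀ from h1 : B*Aᵀ - A*Bᵀ = A*Bᵀ - B*Aᵀ
      apply two_cancel
      calc B * Aᵀ + B * Aᵀ = (B * Aᵀ - A * Bᵀ) + (B * Aᵀ + A * Bᵀ) := by abel
        _ = (A * Bᵀ - B * Aᵀ) + (B * Aᵀ + A * Bᵀ) := by rw [h1]
        _ = A * Bᵀ + A * Bᵀ := by abel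
    · -- A * Cᵀ = C * Aᵀ
      apply two_cancel
      calc A * Cᵀ + A * Cᵀ = (A * Cᵀ + B * Dᵀ) + (A * Cᵀ - B * Dᵀ) := by abel
        _ = (C * Aᵀ + D * Bᵀ) + (C * Aᵀ - D * Bᵀ) := by rw [← h2re, ← h3re]
        _ = C * Aᵀ + C * Aᵀ := by abel
    · -- B * Dᵀ = D * Bᵀ
      apply two_cancel
      calc B * Dᵀ + B * Dᵀ = (A * Cᵀ + B * Dᵀ) - (A * Cᵀ - B * Dᵀ) := by abel
        _ = (C * Aᵀ + D * Bᵀ) - (C * Aᵀ - D * Bᵀ) := by rw [← h2re, ← h3re]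
        _ = D * Bᵀ + D * Bᵀ := by abel
    · -- B * Cᵀ = C * Bᵀ
      apply two_cancel
      calc B * Cᵀ + B * Cᵀ = (B * Cᵀ + A * Dᵀ) - (A * Dᵀ - B * Cᵀ) := by abel
        _ = (C * Bᵀ + D * Aᵀ) - (D * Aᵀ - C * Bᵀ) := by
            rw [← h2im, ← h3im]; abel
        _ = C * Bᵀ + C * Bᵀ := by abel
    · -- A * Dᵀ = D * Aᵀ
      apply two_cancel
      calc A * Dᵀ + A * Dᵀ = (B * Cᵀ + A * Dᵀ) + (A * Dᵀ - B * Cᵀ) := by abel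
        _ = (C * Bᵀ + D * Aᵀ) + (D * Aᵀ - C * Bᵀ) := by
            rw [← h2im, ← h3im]; abel
        _ = D * Aᵀ + D * Aᵀ := by abel
  · rintro ⟨t1, t2, t3, t4, t5⟩
    refine ⟨⟨rfl, ?_⟩, ⟨?_, ?_⟩, ⟨?_, ?_⟩⟩
    · rw [t1]
    · rw [← t2, ← t3]
    · rw [← t4, ← t5]
    · rw [← t2, ← t3]
    · rw [← t4, ← t5]; exact (add_comm (B * Cᵀ) (A * Dᵀ)).symm
end

section
/- Let 𝓗 be a complex Hilbert space, H and L bounded linear operators on 𝓗 with H self-adjoint, ψ ∈ 𝓗 a unit vector, and r a real number with 0 ≤ r ≤ 1. Set m := ⟨L + L†⟩ (which is a real number), A := −iH − (1/2)L†L + (1 − r²)·m·L, C := √(1 − r²)·L, Â := (3/8)⟨C + C†⟩² − (1/2)⟨A + A†⟩ − (1/2)⟨C†C⟩, and Ĉ := −(1/2)⟨C + C†⟩. Then the following operator identity holds: A + Â·I + Ĉ·C = −iH − (1/2)L†L + (1/2)(1 − r²)·m·L + ((1/2)r²⟨L†L⟩ − (1/8)(1 − r²)m²)·I. (This identity shows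 that the corrected unnormalized stochastic Schrödinger equation accounting for the beam splitter normalizes to the deterministic drift of the quantum filter for joint homodyne detection and photon counting.) -/
/-!
Since `L + L†` is self-adjoint, `m = ⟨L + L†⟩` is real. With the real number `s = √(1 - r²)`
we have `C = s L`, `s² = 1 - r²`, hence `⟨C + C†⟩ = s m` and `⟨C†C⟩ = s² ⟨L†L⟩`; and because
`H` is self-adjoint and the coefficient `s² m` of `L` in `A` is real,
`A + A† = -L†L + s² m (L + L†)`.
Substituting gives `Â = ½ r² ⟨L†L⟩ - ⅛ s² m²` and `Ĉ C = -½ s² m L`, and the identity is linear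
algebra.
-/

open ContinuousLinearMap

namespace ContinuousLinearMap

variable {𝓗 : Type*} [NormedAddCommGroup 𝓗] [InnerProductSpace ℂ 𝓗] [CompleteSpace 𝓗]

lemma adjoint_smul_of_isSelfAdjoint {c : ℂ} (hc : IsSelfAdjoint c) (T : 𝓗 →L[ℂ] 𝓗) :
    adjoint (c • T) = c • adjoint T := by
  rw [← star_eq_adjoint, star_smul, hc.star_eq, star_eq_adjoint]

lemma adjoint_I_smul_of_isSelfAdjoint {H : 𝓗 →L[ℂ] 𝓗} (hH : IsSelfAdjoint H) :
    adjoint (Complex.I • H) = -(Complex.I • H) := by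
  rw [← star_eq_adjoint, star_smul, hH.star_eq, Complex.star_def, Complex.conj_I, neg_smul]

lemma add_adjoint_drift {H : 𝓗 →L[ℂ] 𝓗} (hH : IsSelfAdjoint H) (L : 𝓗 →L[ℂ] 𝓗) {c : ℂ}
    (hc : IsSelfAdjoint c) :
    let A := -(Complex.I • H) - (1 / 2 : ℂ) • (adjoint L * L) + c • L
    A + adjoint A = -(adjoint L * L) + c • (L + adjoint L) := by
  have hhalf : IsSelfAdjoint (1 / 2 : ℂ) := by simp [isSelfAdjoint_iff]
  have hLL : IsSelfAdjoint (adjoint L * L) := IsSelfAdjoint.star_mul_self L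
  simp only [map_add, map_sub, map_neg, adjoint_I_smul_of_isSelfAdjoint hH,
    adjoint_smul_of_isSelfAdjoint hc, adjoint_smul_of_isSelfAdjoint hhalf,
    hLL.adjoint_eq]
  module

end ContinuousLinearMap

theorem stmt_12_general {𝓗 : Type*} [NormedAddCommGroup 𝓗] [InnerProductSpace ℂ 𝓗]
    [CompleteSpace 𝓗] (H L : 𝓗 →L[ℂ] 𝓗) (hH : IsSelfAdjoint H)
    (ψ : 𝓗) (r : ℝ) (hr0 : 0 ≤ r) (hr1 : r ≤ 1) :
    let exp : (𝓗 →L[ℂ] 𝓗) → ℂ := fun X => inner ℂ ψ (X ψ)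
    let m : ℂ := exp (L + adjoint L)
    let A : 𝓗 →L[ℂ] 𝓗 :=
      -(Complex.I • H) - (1 / 2 : ℂ) • (adjoint L * L) + ((1 - (r : ℂ) ^ 2) * m) • L
    let C : 𝓗 →L[ℂ] 𝓗 := (Real.sqrt (1 - r ^ 2) : ℂ) • L
    let Ahat : ℂ := (3 / 8) * (exp (C + adjoint C)) ^ 2 - (1 / 2) * exp (A + adjoint A)
      - (1 / 2) * exp (adjoint C * C)
    let Chat : ℂ := -(1 / 2) * exp (C + adjoint C)
    m.im = 0 ∧
    A + Ahat • (1 : 𝓗 →L[ℂ] 𝓗) + Chat • C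
      = -(Complex.I • H) - (1 / 2 : ℂ) • (adjoint L * L)
        + ((1 / 2) * (1 - (r : ℂ) ^ 2) * m) • L
        + ((1 / 2) * (r : ℂ) ^ 2 * exp (adjoint L * L)
            - (1 / 8) * (1 - (r : ℂ) ^ 2) * m ^ 2) • (1 : 𝓗 →L[ℂ] 𝓗) := by
  intro exp m A C Ahat Chat
  have hm_im : m.im = 0 := (IsSelfAdjoint.add_star_self L).isSymmetric.im_inner_self_apply ψ
  have hm : IsSelfAdjoint m := (Complex.im_eq_zero_iff_isSelfAdjoint m).mp hm_im
  set s : ℂ := (√(1 - r ^ 2) : ℂ)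
  have hs : IsSelfAdjoint s := Complex.conj_ofReal _
  have hs2 : s ^ 2 = 1 - (r : ℂ) ^ 2 := by
    rw [← Complex.ofReal_pow, Real.sq_sqrt (by nlinarith)]
    push_cast; ring
  have exp_add (X Y) : exp (X + Y) = exp X + exp Y := inner_add_right ..
  have exp_neg (X) : exp (-X) = -exp X := inner_neg_right ..
  have exp_smul (c : ℂ) (X) : exp (c • X) = c * exp X := inner_smul_right ..
  have hCs : C = s • L := rfl
  have hexpC : exp (C + adjoint C) = s * m := by
    rw [hCs, adjoint_smul_of_isSelfAdjoint hs, ← smul_add, exp_smul]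
  have hexpCC : exp (adjoint C * C) = s ^ 2 * exp (adjoint L * L) := by
    rw [hCs, adjoint_smul_of_isSelfAdjoint hs, smul_mul_smul, ← pow_two, exp_smul]
  have hexpA : exp (A + adjoint A) = -exp (adjoint L * L) + (1 - (r : ℂ) ^ 2) * m * m := by
    rw [add_adjoint_drift hH L ((hs2 ▸ hs.pow 2).mul hm), exp_add, exp_neg, exp_smul]
  have hAhat : Ahat = (1 / 2) * (r : ℂ) ^ 2 * exp (adjoint L * L)
      - (1 / 8) * (1 - (r : ℂ) ^ 2) * m ^ 2 := by
    simp only [Ahat, hexpC, hexpA, hexpCC]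
    linear_combination (3 / 8 * m ^ 2 - 1 / 2 * exp (adjoint L * L)) * hs2
  have hChat : Chat • C = (-(1 / 2) * (1 - (r : ℂ) ^ 2) * m) • L := by
    rw [show Chat = -(1 / 2) * (s * m) by simp only [Chat, hexpC], hCs, smul_smul]
    congr 1
    linear_combination (-(m / 2)) * hs2
  refine ⟨hm_im, ?_⟩
  rw [hAhat, hChat]
  module

/-- Normalization of the corrected unnormalized SSE (accounting for the beam splitter)
gives the deterministic drift of the quantum filter for joint homodyne detection and
photon counting. -/
theorem stmt_12 {𝓗 : Type*} [NormedAddCommGroup 𝓗] [InnerProductSpace ℂ 𝓗]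
    [CompleteSpace 𝓗] (H L : 𝓗 →L[ℂ] 𝓗) (hH : IsSelfAdjoint H)
    (ψ : 𝓗) (hψ : ‖ψ‖ = 1) (r : ℝ) (hr0 : 0 ≤ r) (hr1 : r ≤ 1) :
    let exp : (𝓗 →L[ℂ] 𝓗) → ℂ := fun X => inner ℂ ψ (X ψ)
    let m : ℂ := exp (L + adjoint L)
    let A : 𝓗 →L[ℂ] 𝓗 :=
      -(Complex.I • H) - (1 / 2 : ℂ) • (adjoint L * L) + ((1 - (r : ℂ) ^ 2) * m) • L
    let C : 𝓗 →L[ℂ] 𝓗 := (Real.sqrt (1 - r ^ 2) : ℂ) • L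
    let Ahat : ℂ := (3 / 8) * (exp (C + adjoint C)) ^ 2 - (1 / 2) * exp (A + adjoint A)
      - (1 / 2) * exp (adjoint C * C)
    let Chat : ℂ := -(1 / 2) * exp (C + adjoint C)
    m.im = 0 ∧
    A + Ahat • (1 : 𝓗 →L[ℂ] 𝓗) + Chat • C
      = -(Complex.I • H) - (1 / 2 : ℂ) • (adjoint L * L)
        + ((1 / 2) * (1 - (r : ℂ) ^ 2) * m) • L
        + ((1 / 2) * (r : ℂ) ^ 2 * exp (adjoint L * L)
            - (1 / 8) * (1 - (r : ℂ) ^ 2) * m ^ 2) • (1 : 𝓗 →L[ℂ] 𝓗) :=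
  stmt_12_general H L hH ψ r hr0 hr1
end
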